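/- arXiv:1501.05766 — 4 statements merged into one kernel-verified Lean document; each statement's English description precedes it below -/
import Mathlib

section
/- Let r₀ > 0 and let β : (r₀,∞) → ℝ and ψ : (r₀,∞) → ℝ be Lebesgue measurable and nonnegative with ∫_{r₀}^∞ r̃ β(r̃) ψ(r̃) dr̃ < ∞. Then 2 ∫₀^∞ r ( ∫_r^∞ κ(r, r̃) β(r̃) ψ(r̃) dr̃ ) dr = ∫_{r₀}^∞ r̃ β(r̃) ψ(r̃) dr̃. -/
open MeasureTheory Set

/-- The fragmentation kernel of assumption (A4):
`κ(r, r̃) = 1/r̃` if `r̃ > r₀` and `0 < r < r̃`, and `0` otherwise. -/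
noncomputable def kappa (r₀ r rt : ℝ) : ℝ :=
  if r₀ < rt ∧ 0 < r ∧ r < rt then 1 / rt else 0

lemma kappa_meas (r₀ : ℝ) : Measurable (fun p : ℝ × ℝ => kappa r₀ p.1 p.2) := by
  unfold kappa
  apply Measurable.ite _ (measurable_const.div measurable_snd) measurable_const
  have : {p : ℝ × ℝ | r₀ < p.2 ∧ 0 < p.1 ∧ p.1 < p.2}
      = {p : ℝ × ℝ | r₀ < p.2} ∩ ({p : ℝ × ℝ | 0 < p.1} ∩ {p : ℝ × ℝ | p.1 < p.2}) := by
    ext p; simp [Set.mem_setOf_eq, and_assoc]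
  rw [this]
  exact (measurableSet_lt measurable_const measurable_snd).inter
    ((measurableSet_lt measurable_const measurable_fst).inter
      (measurableSet_lt measurable_fst measurable_snd))

lemma main_h (r₀ : ℝ) (hr₀ : 0 < r₀) (h : ℝ → ℝ) (hm : Measurable h)
    (h0 : ∀ x, 0 ≤ h x) (hz : ∀ x, ¬ r₀ < x → h x = 0)
    (hint : IntegrableOn (fun rt => rt * h rt) (Set.Ioi r₀)) :
    2 * ∫ r in Set.Ioi (0 : ℝ), r * ∫ rt in Set.Ioi r, kappa r₀ r rt * h rt
      = ∫ rt in Set.Ioi r₀, rt * h rt := by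
  set F : ℝ → ℝ → ENNReal := fun r rt => ENNReal.ofReal (r * (kappa r₀ r rt * h rt)) with hF
  -- nonnegativity of the integrand
  have hnn : ∀ r rt, 0 ≤ r * (kappa r₀ r rt * h rt) := by
    intro r rt
    unfold kappa
    split
    · next hc =>
      have hrt : 0 < rt := hr₀.trans hc.1
      exact mul_nonneg hc.2.1.le (mul_nonneg (one_div_nonneg.mpr hrt.le) (h0 rt))
    · simp
  have hFm : Measurable (fun p : ℝ × ℝ => F p.1 p.2) := by
    exact (measurable_fst.mul ((kappa_meas r₀).mul (hm.comp measurable_snd))).ennreal_ofReal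
  -- key1 : inner integral as lintegral
  have key1 : ∀ r : ℝ, r * ∫ rt in Set.Ioi r, kappa r₀ r rt * h rt
      = (∫⁻ rt, F r rt).toReal := by
    intro r
    have hmr : Measurable (fun rt => r * (kappa r₀ r rt * h rt)) := by
      exact measurable_const.mul
        ((((kappa_meas r₀).comp (measurable_prodMk_left)).mul hm))
    rw [← integral_const_mul]
    rw [integral_eq_lintegral_of_nonneg_ae
      (Filter.Eventually.of_forall (fun rt => hnn r rt)) hmr.aestronglyMeasurable]
    congr 1
    rw [← lintegral_indicator measurableSet_Ioi]
    congr 1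
    funext rt
    rw [Set.indicator_apply]
    split
    · rfl
    · next hrt =>
      have : kappa r₀ r rt = 0 := by
        unfold kappa; rw [if_neg]; rintro ⟨-, -, hlt⟩; exact hrt hlt
      simp [hF, this]
  -- key2 : lintegral in r for fixed rt
  have key2 : ∀ rt : ℝ, (∫⁻ r, F r rt) = ENNReal.ofReal (rt * h rt / 2) := by
    intro rt
    by_cases hrt : r₀ < rt
    · have hrtpos : 0 < rt := hr₀.trans hrt
      have hind : (fun r => F r rt)
          = Set.indicator (Set.Ioo 0 rt) (fun r => ENNReal.ofReal (r * (h rt / rt))) := by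
        funext r
        rw [Set.indicator_apply]
        by_cases hr : r ∈ Set.Ioo 0 rt
        · rw [if_pos hr]
          have : kappa r₀ r rt = 1 / rt := by
            unfold kappa; rw [if_pos ⟨hrt, hr.1, hr.2⟩]
          simp only [hF, this]
          congr 1
          field_simp
        · rw [if_neg hr]
          have : kappa r₀ r rt = 0 := by
            unfold kappa; rw [if_neg]
            rintro ⟨-, h1, h2⟩; exact hr ⟨h1, h2⟩
          simp [hF, this]
      rw [hind, lintegral_indicator measurableSet_Ioo]
      have hInt : Integrable (fun r : ℝ => r * (h rt / rt))
          (volume.restrict (Set.Ioo 0 rt)) := by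
        apply Integrable.mul_const
        exact (intervalIntegrable_iff_integrableOn_Ioo_of_le hrtpos.le).mp
          (intervalIntegral.intervalIntegrable_id (μ := volume) (a := 0) (b := rt))
      rw [← ofReal_integral_eq_lintegral_ofReal hInt]
      · congr 1
        rw [integral_mul_const]
        have : ∫ r in Set.Ioo (0:ℝ) rt, r = rt ^ 2 / 2 := by
          rw [← integral_Ioc_eq_integral_Ioo,
            ← intervalIntegral.integral_of_le hrtpos.le]
          simp [integral_id]
        rw [this]
        field_simp
      · filter_upwards [ae_restrict_mem measurableSet_Ioo] with r hr
        have h1 := hr.1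
        exact mul_nonneg h1.le (div_nonneg (h0 rt) hrtpos.le)
    · have hz' := hz rt hrt
      have hF0 : ∀ r : ℝ, F r rt = 0 := by
        intro r
        have : kappa r₀ r rt = 0 := by
          unfold kappa; rw [if_neg]; rintro ⟨h1, -⟩; exact hrt h1
        simp [hF, this]
      simp [hF0, hz']
  -- Tonelli
  have swap : ∫⁻ r, ∫⁻ rt, F r rt = ∫⁻ rt, ∫⁻ r, F r rt :=
    lintegral_lintegral_swap hFm.aemeasurable
  set M := ∫ rt in Set.Ioi r₀, rt * h rt with hM
  have hM0 : 0 ≤ M := by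
    apply setIntegral_nonneg measurableSet_Ioi
    intro x hx
    have hx0 : 0 < x := hr₀.trans hx
    exact mul_nonneg hx0.le (h0 x)
  have hright : ∫⁻ rt, ∫⁻ r, F r rt = ENNReal.ofReal (M / 2) := by
    simp_rw [key2]
    have hind : (fun rt => ENNReal.ofReal (rt * h rt / 2))
        = Set.indicator (Set.Ioi r₀) (fun rt => ENNReal.ofReal (rt * h rt / 2)) := by
      funext rt
      rw [Set.indicator_apply]
      split
      · rfl
      · next hrt => simp [hz rt (by simpa using hrt)]
    rw [hind, lintegral_indicator measurableSet_Ioi]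
    rw [← ofReal_integral_eq_lintegral_ofReal (hint.div_const 2)]
    · rw [integral_div]
    · filter_upwards [ae_restrict_mem measurableSet_Ioi] with x hx
      have hx0 : 0 < x := hr₀.trans hx
      exact div_nonneg (mul_nonneg hx0.le (h0 x)) two_pos.le
  have htot : ∫⁻ r, ∫⁻ rt, F r rt = ENNReal.ofReal (M / 2) := swap.trans hright
  -- finish
  have hJm : Measurable (fun r => ∫⁻ rt, F r rt) := hFm.lintegral_prod_right'
  have hlt : ∀ᵐ r ∂(volume.restrict (Set.Ioi (0:ℝ))), (∫⁻ rt, F r rt) < ⊤ := by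
    apply ae_restrict_of_ae
    exact ae_lt_top hJm (by rw [htot]; exact ENNReal.ofReal_ne_top)
  simp_rw [key1]
  rw [integral_toReal (hJm.aemeasurable.restrict) hlt]
  have hJ0 : ∀ r : ℝ, r ∉ Set.Ioi (0:ℝ) → (∫⁻ rt, F r rt) = 0 := by
    intro r hr
    have : ∀ rt, F r rt = 0 := by
      intro rt
      have : kappa r₀ r rt = 0 := by
        unfold kappa; rw [if_neg]; rintro ⟨-, h1, -⟩; exact hr h1
      simp [hF, this]
    simp [this]
  have hres : ∫⁻ r in Set.Ioi (0:ℝ), ∫⁻ rt, F r rt = ∫⁻ r, ∫⁻ rt, F r rt := by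
    rw [← lintegral_indicator measurableSet_Ioi]
    congr 1
    funext r
    rw [Set.indicator_apply]
    split
    · rfl
    · next hr => exact (hJ0 r hr).symm
  rw [hres, htot, ENNReal.toReal_ofReal (by linarith)]
  ring

/-- The Fubini-type cancellation identity from the conservation-of-mass lemma:
`2 ∫₀^∞ r (∫_r^∞ κ(r,r̃) β(r̃) ψ(r̃) dr̃) dr = ∫_{r₀}^∞ r̃ β(r̃) ψ(r̃) dr̃`. -/
theorem stmt1 (r₀ : ℝ) (hr₀ : 0 < r₀) (β ψ : ℝ → ℝ)
    (hβm : AEMeasurable β (volume.restrict (Set.Ioi r₀)))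
    (hψm : AEMeasurable ψ (volume.restrict (Set.Ioi r₀)))
    (hβ0 : ∀ r ∈ Set.Ioi r₀, 0 ≤ β r) (hψ0 : ∀ r ∈ Set.Ioi r₀, 0 ≤ ψ r)
    (hint : IntegrableOn (fun rt => rt * (β rt * ψ rt)) (Set.Ioi r₀)) :
    2 * ∫ r in Set.Ioi (0 : ℝ), r * ∫ rt in Set.Ioi r, kappa r₀ r rt * (β rt * ψ rt)
      = ∫ rt in Set.Ioi r₀, rt * (β rt * ψ rt) := by
  obtain ⟨b, hb, hbe⟩ := hβm
  obtain ⟨p, hp, hpe⟩ := hψm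
  have haeβ : ∀ᵐ x ∂(volume : Measure ℝ), x ∈ Set.Ioi r₀ → β x = b x :=
    (ae_restrict_iff' measurableSet_Ioi).mp hbe
  have haeψ : ∀ᵐ x ∂(volume : Measure ℝ), x ∈ Set.Ioi r₀ → ψ x = p x :=
    (ae_restrict_iff' measurableSet_Ioi).mp hpe
  set h : ℝ → ℝ := fun rt => if r₀ < rt then max 0 (b rt * p rt) else 0 with hh
  have hm : Measurable h :=
    Measurable.ite measurableSet_Ioi (measurable_const.max (hb.mul hp)) measurable_const
  have h0 : ∀ x, 0 ≤ h x := by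
    intro x
    simp only [hh]
    split
    · exact le_max_left _ _
    · exact le_refl 0
  have hz : ∀ x, ¬ r₀ < x → h x = 0 := by
    intro x hx; simp [hh, hx]
  have heq : ∀ᵐ x ∂(volume : Measure ℝ), x ∈ Set.Ioi r₀ → β x * ψ x = h x := by
    filter_upwards [haeβ, haeψ] with x h1 h2 hx
    simp only [hh]
    rw [if_pos (Set.mem_Ioi.mp hx), ← h1 hx, ← h2 hx,
      max_eq_right (mul_nonneg (hβ0 x hx) (hψ0 x hx))]
  have heq' : (fun rt => rt * (β rt * ψ rt))
      =ᵐ[volume.restrict (Set.Ioi r₀)] (fun rt => rt * h rt) := by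
    apply (ae_restrict_iff' measurableSet_Ioi).mpr
    filter_upwards [heq] with x hx hmem
    rw [hx hmem]
  have hint' : IntegrableOn (fun rt => rt * h rt) (Set.Ioi r₀) := hint.congr heq'
  have hR : ∫ rt in Set.Ioi r₀, rt * (β rt * ψ rt) = ∫ rt in Set.Ioi r₀, rt * h rt :=
    integral_congr_ae heq'
  have hker : ∀ᵐ rt ∂(volume : Measure ℝ),
      ∀ r, kappa r₀ r rt * (β rt * ψ rt) = kappa r₀ r rt * h rt := by
    filter_upwards [heq] with rt hrt r
    by_cases h1 : r₀ < rt
    · rw [hrt h1]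
    · have hk : kappa r₀ r rt = 0 := by
        unfold kappa; rw [if_neg]; rintro ⟨hc, -⟩; exact h1 hc
      rw [hk]; ring
  have hL : ∀ r : ℝ, (∫ rt in Set.Ioi r, kappa r₀ r rt * (β rt * ψ rt))
      = ∫ rt in Set.Ioi r, kappa r₀ r rt * h rt := fun r =>
    integral_congr_ae (ae_restrict_of_ae (hker.mono fun rt hrt => hrt r))
  have hfun : (fun r : ℝ => r * ∫ rt in Set.Ioi r, kappa r₀ r rt * (β rt * ψ rt))
      = fun r : ℝ => r * ∫ rt in Set.Ioi r, kappa r₀ r rt * h rt :=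
    funext fun r => by rw [hL r]
  rw [hfun, hR]
  exact main_h r₀ hr₀ h hm h0 hz hint'
end

section
/- Let r₀ > 0, let α ≥ 0, and let β : (r₀,∞) → ℝ and ψ : (r₀,∞) → ℝ be Lebesgue measurable and nonnegative with ∫_{r₀}^∞ r^α β(r) ψ(r) dr < ∞. Then 2 ∫_{r₀}^∞ r^α ( ∫_r^∞ κ(r, r̃) β(r̃) ψ(r̃) dr̃ ) dr = (2/(α+1)) ∫_{r₀}^∞ r^α β(r) ψ(r) dr − (2 r₀^{α+1}/(α+1)) ∫_{r₀}^∞ β(r) ψ(r)/r dr. -/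
/-!
For `r > r₀` the kernel reduces the inner integral to `∫_r^∞ βψ(r̃)/r̃ dr̃`. Writing `h(t) = βψ(t)/t`,
Fubini on the region `r₀ < r < t` gives
`∫_{r₀}^∞ r^α ∫_r^∞ h(t) dt dr = ∫_{r₀}^∞ h(t) (t^(α+1) - r₀^(α+1))/(α+1) dt`,
and `t^(α+1) h(t) = t^α βψ(t)`. The Fubini step is justified by the same computation applied
to `|h|`, with `h` integrable because `1/t ≤ r₀^(-(α+1)) t^α` on `(r₀, ∞)`.
-/

open MeasureTheory Set

lemma kappa_eq_one_div {r₀ r rt : ℝ} (hr₀ : 0 < r₀) (hr : r₀ < r) (hrt : r < rt) :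
    kappa r₀ r rt = 1 / rt :=
  if_pos ⟨hr.trans hrt, hr₀.trans hr, hrt⟩

lemma integrableOn_div_self_of_integrableOn_rpow_mul {a α : ℝ} {f : ℝ → ℝ} (ha : 0 < a)
    (hα : -1 ≤ α) (hf : IntegrableOn (fun t => t ^ α * f t) (Ioi a)) :
    IntegrableOn (fun t => f t / t) (Ioi a) := by
  have hbound : ∀ᵐ t ∂volume.restrict (Ioi a), ‖t ^ (-(α + 1))‖ ≤ a ^ (-(α + 1)) := by
    filter_upwards [self_mem_ae_restrict measurableSet_Ioi] with t ht
    rw [Real.norm_of_nonneg (Real.rpow_nonneg (ha.trans ht).le _)]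
    exact Real.rpow_le_rpow_of_nonpos ha ht.le (by linarith)
  refine (hf.bdd_mul (measurable_id.pow_const (-(α + 1))).aestronglyMeasurable hbound).congr ?_
  filter_upwards [self_mem_ae_restrict measurableSet_Ioi] with t ht
  have ht₀ : 0 < t := ha.trans ht
  rw [id, ← mul_assoc, ← Real.rpow_add ht₀, show -(α + 1) + α = -1 by ring, Real.rpow_neg_one,
    inv_mul_eq_div]

section VolterraSwap

variable {a α : ℝ}

lemma rpow_mul_indicator_Ioi_eq_indicator_Iio (g : ℝ → ℝ) (r t : ℝ) :
    r ^ α * (Ioi r).indicator g t = (Iio t).indicator (fun r => r ^ α * g t) r := by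
  by_cases hrt : r < t <;> simp [hrt]

lemma integrableOn_rpow_mul_indicator_Ioi (hα : -1 < α) (g : ℝ → ℝ) (t : ℝ) :
    IntegrableOn (fun r => r ^ α * (Ioi r).indicator g t) (Ioi a) := by
  simp_rw [rpow_mul_indicator_Ioi_eq_indicator_Iio]
  rw [IntegrableOn, integrable_indicator_iff measurableSet_Iio, IntegrableOn,
    Measure.restrict_restrict measurableSet_Iio, Iio_inter_Ioi]
  exact ((intervalIntegral.intervalIntegrable_rpow' hα).1.mono_set Ioo_subset_Ioc_self).mul_const _

lemma integral_Ioi_rpow_mul_indicator_Ioi (hα : -1 < α) (g : ℝ → ℝ) {t : ℝ} (ht : a < t) :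
    ∫ r in Ioi a, r ^ α * (Ioi r).indicator g t = (t ^ (α + 1) - a ^ (α + 1)) / (α + 1) * g t := by
  simp_rw [rpow_mul_indicator_Ioi_eq_indicator_Iio]
  rw [setIntegral_indicator measurableSet_Iio, Ioi_inter_Iio, integral_mul_const,
    ← integral_Ioc_eq_integral_Ioo, ← intervalIntegral.integral_of_le ht.le,
    integral_rpow (Or.inl hα)]

lemma integrable_prod_rpow_mul_indicator_Ioi {h : ℝ → ℝ} (ha : 0 ≤ a) (hα : -1 < α)
    (hh : IntegrableOn h (Ioi a)) (hh' : IntegrableOn (fun t => t ^ (α + 1) * h t) (Ioi a)) :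
    Integrable (Function.uncurry fun r t => r ^ α * (Ioi r).indicator h t)
      ((volume.restrict (Ioi a)).prod (volume.restrict (Ioi a))) := by
  have hmeas : AEStronglyMeasurable (Function.uncurry fun r t => r ^ α * (Ioi r).indicator h t)
      ((volume.restrict (Ioi a)).prod (volume.restrict (Ioi a))) := by
    have : (Function.uncurry fun r t => r ^ α * (Ioi r).indicator h t)
        = {p : ℝ × ℝ | p.1 < p.2}.indicator (fun p => p.1 ^ α * h p.2) := by
      ext ⟨r, t⟩
      simp [indicator_apply]
    rw [this]
    exact ((measurable_fst.pow_const α).aestronglyMeasurable.mul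
      hh.aestronglyMeasurable.comp_snd).indicator (measurableSet_lt measurable_fst measurable_snd)
  rw [integrable_prod_iff' hmeas]
  refine ⟨?_, ?_⟩
  · exact Filter.Eventually.of_forall (integrableOn_rpow_mul_indicator_Ioi hα h)
  · refine ((hh'.norm.sub (hh.norm.const_mul (a ^ (α + 1)))).div_const (α + 1)).congr ?_
    filter_upwards [self_mem_ae_restrict measurableSet_Ioi] with t ht
    have hnorm : ∀ r ∈ Ioi a,
        ‖r ^ α * (Ioi r).indicator h t‖ = r ^ α * (Ioi r).indicator (fun s => ‖h s‖) t :=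
      fun r hr => by
        rw [norm_mul, norm_indicator_eq_indicator_norm,
          Real.norm_of_nonneg (Real.rpow_nonneg (ha.trans hr.le) _)]
    simp only [Function.uncurry_apply_pair, Pi.sub_apply]
    rw [setIntegral_congr_fun measurableSet_Ioi hnorm,
      integral_Ioi_rpow_mul_indicator_Ioi hα _ ht, norm_mul,
      Real.norm_of_nonneg (Real.rpow_nonneg (ha.trans ht.le) _)]
    ring

theorem integral_Ioi_rpow_mul_integral_Ioi {h : ℝ → ℝ} (ha : 0 ≤ a) (hα : -1 < α)
    (hh : IntegrableOn h (Ioi a)) (hh' : IntegrableOn (fun t => t ^ (α + 1) * h t) (Ioi a)) :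
    ∫ r in Ioi a, r ^ α * ∫ t in Ioi r, h t
      = ((∫ t in Ioi a, t ^ (α + 1) * h t) - a ^ (α + 1) * ∫ t in Ioi a, h t) / (α + 1) := by
  calc ∫ r in Ioi a, r ^ α * ∫ t in Ioi r, h t
      = ∫ r in Ioi a, ∫ t in Ioi a, r ^ α * (Ioi r).indicator h t := by
        refine setIntegral_congr_fun measurableSet_Ioi fun r hr => ?_
        rw [integral_const_mul, setIntegral_indicator measurableSet_Ioi, Ioi_inter_Ioi,
          sup_eq_right.2 hr.le]
    _ = ∫ t in Ioi a, ∫ r in Ioi a, r ^ α * (Ioi r).indicator h t :=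
        integral_integral_swap (integrable_prod_rpow_mul_indicator_Ioi ha hα hh hh')
    _ = ∫ t in Ioi a, (t ^ (α + 1) * h t - a ^ (α + 1) * h t) / (α + 1) := by
        refine setIntegral_congr_fun measurableSet_Ioi fun t ht => ?_
        rw [integral_Ioi_rpow_mul_indicator_Ioi hα h ht]
        ring
    _ = _ := by rw [integral_div, integral_sub hh' (hh.const_mul _), integral_const_mul]

end VolterraSwap

theorem stmt2_general (r₀ α : ℝ) (hr₀ : 0 < r₀) (hα : 0 ≤ α) (β ψ : ℝ → ℝ)
    (hint : IntegrableOn (fun r => r ^ α * (β r * ψ r)) (Set.Ioi r₀)) :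
    2 * ∫ r in Set.Ioi r₀, r ^ α * ∫ rt in Set.Ioi r, kappa r₀ r rt * (β rt * ψ rt)
      = (2 / (α + 1)) * (∫ r in Set.Ioi r₀, r ^ α * (β r * ψ r))
        - (2 * r₀ ^ (α + 1) / (α + 1)) * ∫ r in Set.Ioi r₀, β r * ψ r / r := by
  have hdiv := integrableOn_div_self_of_integrableOn_rpow_mul hr₀ (by linarith) hint
  have hpow : ∀ t ∈ Ioi r₀, t ^ (α + 1) * (β t * ψ t / t) = t ^ α * (β t * ψ t) := fun t ht => by
    rw [Real.rpow_add_one (hr₀.trans ht).ne']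
    field_simp [(hr₀.trans ht).ne']
  have hinner : ∀ r ∈ Ioi r₀, r ^ α * ∫ rt in Ioi r, kappa r₀ r rt * (β rt * ψ rt)
      = r ^ α * ∫ rt in Ioi r, β rt * ψ rt / rt := fun r hr => by
    rw [setIntegral_congr_fun measurableSet_Ioi fun rt hrt => by
      rw [kappa_eq_one_div hr₀ hr hrt, one_div_mul_eq_div]]
  rw [setIntegral_congr_fun measurableSet_Ioi hinner,
    integral_Ioi_rpow_mul_integral_Ioi hr₀.le (by linarith) hdiv
      (hint.congr_fun (fun t ht => (hpow t ht).symm) measurableSet_Ioi),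
    setIntegral_congr_fun measurableSet_Ioi hpow]
  ring

/-- The central computation in the proof of the high-order-moments lemma:
`2 ∫_{r₀}^∞ r^α (∫_r^∞ κ(r,r̃) β(r̃) ψ(r̃) dr̃) dr
  = (2/(α+1)) ∫_{r₀}^∞ r^α β ψ dr − (2 r₀^(α+1)/(α+1)) ∫_{r₀}^∞ β ψ / r dr`. -/
theorem stmt2 (r₀ α : ℝ) (hr₀ : 0 < r₀) (hα : 0 ≤ α) (β ψ : ℝ → ℝ)
    (hβm : AEMeasurable β (volume.restrict (Set.Ioi r₀)))
    (hψm : AEMeasurable ψ (volume.restrict (Set.Ioi r₀)))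
    (hβ0 : ∀ r ∈ Set.Ioi r₀, 0 ≤ β r) (hψ0 : ∀ r ∈ Set.Ioi r₀, 0 ≤ ψ r)
    (hint : IntegrableOn (fun r => r ^ α * (β r * ψ r)) (Set.Ioi r₀)) :
    2 * ∫ r in Set.Ioi r₀, r ^ α * ∫ rt in Set.Ioi r, kappa r₀ r rt * (β rt * ψ rt)
      = (2 / (α + 1)) * (∫ r in Set.Ioi r₀, r ^ α * (β r * ψ r))
        - (2 * r₀ ^ (α + 1) / (α + 1)) * ∫ r in Set.Ioi r₀, β r * ψ r / r :=
  stmt2_general r₀ α hr₀ hα β ψ hint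
end

section
/- Let r₀ > 0, let β : [r₀,∞) → ℝ be continuous and strictly positive, let ψ : [r₀,∞) → ℝ be continuous and nonnegative with ∫_{r₀}^∞ β(r̃) ψ(r̃)/r̃ dr̃ < ∞, and define I : [r₀,∞) → ℝ by I(r) := r² ∫_r^∞ β(r̃) ψ(r̃)/r̃ dr̃. Let α : [r₀,∞) → ℝ be nonnegative and such that the function w(r) := α(r)/(r³ β(r)) is continuously differentiable on [r₀,∞). Assume that lim_{r→∞} w(r) I(r)² = 0 and that the functions r ↦ (α(r)/(r² β(r))) I'(r)², r ↦ |w'(r)| I(r)² and r ↦ (α(r) ψ(r)/r) |I'(r)| are Lebesgue integrable on (r₀,∞). Then ∫_{r₀}^∞ (α(r) ψ(r)/r) I'(r) dr = −∫_{r₀}^∞ (α(r)/(r² β(r))) I'(r)² dr − ∫_{r₀}^∞ w'(r) I(r)² dr − (α(r₀)/(r₀³ β(r₀))) I(r₀)². -/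
/-!
Write `J(r) = ∫_r^∞ β ψ / r̃` and `F = w I²`. Since `J' = -β ψ / r`, the product rule gives
`I' = 2 I / r - r β ψ`, i.e. `2 I / r = I' + r β ψ`, and therefore
`F' = w' I² + 2 w I I' = w' I² + (α ψ / r) I' + (α / (r² β)) I'²`.
All three terms are integrable, so the fundamental theorem of calculus on `(r₀, ∞)`, together
with `F → 0` at infinity, gives `∫ F' = -F(r₀)`.
-/

open MeasureTheory Set Filter

theorem MeasureTheory.IntegrableOn.hasDerivAt_primitive_Ioi {E : Type*} [NormedAddCommGroup E]
    [NormedSpace ℝ E] [CompleteSpace E] {f : ℝ → E} {a x : ℝ} (hf : IntegrableOn f (Ioi a))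
    (hx : a < x) (hfx : ContinuousAt f x) :
    HasDerivAt (fun b ↦ ∫ t in Ioi b, f t) (-f x) x := by
  have hprim : HasDerivAt (fun b ↦ ∫ t in a..b, f t) (f x) x :=
    intervalIntegral.integral_hasDerivAt_right
      ((intervalIntegrable_iff_integrableOn_Ioc_of_le hx.le).2 (hf.mono_set Ioc_subset_Ioi_self))
      ⟨Ioi a, Ioi_mem_nhds hx, hf.aestronglyMeasurable⟩ hfx
  refine (hprim.const_sub (∫ t in Ioi a, f t)).congr_of_eventuallyEq ?_
  filter_upwards [Ioi_mem_nhds hx] with b hb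
  rw [← intervalIntegral.integral_Ioi_sub_Ioi hf hb.out.le, sub_sub_cancel]

theorem hasDerivAt_sq_mul_integral_Ioi_mul_div {β ψ : ℝ → ℝ} {a r : ℝ}
    (hint : IntegrableOn (fun t ↦ β t * ψ t / t) (Ioi a)) (har : a < r) (hr : r ≠ 0)
    (hβ : ContinuousAt β r) (hψ : ContinuousAt ψ r) :
    HasDerivAt (fun x ↦ x ^ 2 * ∫ t in Ioi x, β t * ψ t / t)
      (2 * (r ^ 2 * ∫ t in Ioi r, β t * ψ t / t) / r - r * β r * ψ r) r := by
  refine ((hasDerivAt_pow 2 r).fun_mul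
    (hint.hasDerivAt_primitive_Ioi har ((hβ.mul hψ).div continuousAt_id hr))).congr_deriv ?_
  field_simp
  ring

theorem hasDerivAt_div_cube_mul_sq {α β ψ w I : ℝ → ℝ} {r w'r : ℝ}
    (hr : r ≠ 0) (hβ : β r ≠ 0) (hw : w r = α r / (r ^ 3 * β r)) (hwd : HasDerivAt w w'r r)
    (hI : HasDerivAt I (2 * I r / r - r * β r * ψ r) r) :
    HasDerivAt (fun x ↦ w x * I x ^ 2)
      (w'r * I r ^ 2 + (α r * ψ r / r * deriv I r + α r / (r ^ 2 * β r) * deriv I r ^ 2)) r := by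
  refine (hwd.fun_mul (hI.fun_pow 2)).congr_deriv ?_
  rw [hI.deriv, hw]
  field_simp
  ring

theorem stmt6_general (r₀ : ℝ) (hr₀ : 0 < r₀) (β ψ α w w' I : ℝ → ℝ)
    (hβc : ContinuousOn β (Set.Ici r₀)) (hβpos : ∀ r ∈ Set.Ici r₀, 0 < β r)
    (hψc : ContinuousOn ψ (Set.Ici r₀))
    (hint : IntegrableOn (fun rt => β rt * ψ rt / rt) (Set.Ioi r₀))
    (hI : ∀ r, I r = r ^ 2 * ∫ rt in Set.Ioi r, β rt * ψ rt / rt)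
    (hw : ∀ r, w r = α r / (r ^ 3 * β r))
    (hwd : ∀ r ∈ Set.Ici r₀, HasDerivWithinAt w (w' r) (Set.Ici r₀) r)
    (hw'c : ContinuousOn w' (Set.Ici r₀))
    (hlim : Filter.Tendsto (fun r => w r * I r ^ 2) Filter.atTop (nhds 0))
    (hint1 : IntegrableOn (fun r => α r / (r ^ 2 * β r) * (deriv I r) ^ 2) (Set.Ioi r₀))
    (hint2 : IntegrableOn (fun r => |w' r| * I r ^ 2) (Set.Ioi r₀))
    (hint3 : IntegrableOn (fun r => α r * ψ r / r * |deriv I r|) (Set.Ioi r₀)) :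
    ∫ r in Set.Ioi r₀, α r * ψ r / r * deriv I r
      = -(∫ r in Set.Ioi r₀, α r / (r ^ 2 * β r) * (deriv I r) ^ 2)
        - (∫ r in Set.Ioi r₀, w' r * I r ^ 2)
        - α r₀ / (r₀ ^ 3 * β r₀) * I r₀ ^ 2 := by
  have hpos : ∀ r ∈ Ici r₀, 0 < r := fun r hr ↦ hr₀.trans_le hr
  have hIeq : I = fun r ↦ r ^ 2 * ∫ t in Ioi r, β t * ψ t / t := funext hI
  have hI' : ∀ r ∈ Ioi r₀, HasDerivAt I (2 * I r / r - r * β r * ψ r) r := fun r hr ↦ by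
    rw [hIeq]
    exact hasDerivAt_sq_mul_integral_Ioi_mul_div hint hr (hpos r hr.out.le).ne'
      (hβc.continuousAt (Ici_mem_nhds hr)) (hψc.continuousAt (Ici_mem_nhds hr))
  have hF' : ∀ r ∈ Ioi r₀, HasDerivAt (fun r ↦ w r * I r ^ 2)
      (w' r * I r ^ 2 + (α r * ψ r / r * deriv I r + α r / (r ^ 2 * β r) * deriv I r ^ 2)) r :=
    fun r hr ↦ hasDerivAt_div_cube_mul_sq (hpos r hr.out.le).ne'
      (hβpos r hr.out.le).ne' (hw r) ((hwd r hr.out.le).hasDerivAt (Ici_mem_nhds hr)) (hI' r hr)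
  have hIc : ContinuousOn I (Ici r₀) :=
    hIeq ▸ (continuousOn_pow 2).mul hint.continuousOn_Ici_primitive_Ioi
  have hwc : ContinuousOn w (Ici r₀) := fun r hr ↦ (hwd r hr).continuousWithinAt
  have hαc : ContinuousOn α (Ici r₀) := by
    refine (hwc.mul ((continuousOn_pow 3).mul hβc)).congr fun r hr ↦ ?_
    show α r = w r * (r ^ 3 * β r)
    rw [hw, div_mul_cancel₀ _ (mul_pos (pow_pos (hpos r hr) 3) (hβpos r hr)).ne']
  have hint3' : IntegrableOn (fun r ↦ α r * ψ r / r * deriv I r) (Ioi r₀) := by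
    refine Integrable.mono hint3 ?_ (ae_of_all _ fun r ↦ by simp)
    refine AEStronglyMeasurable.mul ?_ (measurable_deriv I).aestronglyMeasurable
    exact ((hαc.mul hψc).div continuousOn_id fun r hr ↦ (hpos r hr).ne').mono
      Ioi_subset_Ici_self |>.aestronglyMeasurable measurableSet_Ioi
  have hint2' : IntegrableOn (fun r ↦ w' r * I r ^ 2) (Ioi r₀) :=
    Integrable.mono hint2 (((hw'c.mul (hIc.pow 2)).mono Ioi_subset_Ici_self).aestronglyMeasurable
      measurableSet_Ioi) (ae_of_all _ fun r ↦ by simp)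
  have hFTC := integral_Ioi_of_hasDerivAt_of_tendsto
    ((hwc.fun_mul (hIc.fun_pow 2)) r₀ self_mem_Ici) hF' (hint2'.add (hint3'.fun_add hint1)) hlim
  rw [integral_add hint2' (hint3'.fun_add hint1), integral_add hint3' hint1, hw] at hFTC
  linarith

/-- The integration-by-parts identity (compute2) in the proof of the parabolic-hyperbolic
estimates for `ψ`: with `I(r) := r² ∫_r^∞ β ψ / r̃ dr̃` and `w(r) := α(r)/(r³ β(r))`
continuously differentiable on `[r₀,∞)` with `w(r) I(r)² → 0` as `r → ∞`,
`∫_{r₀}^∞ (α ψ / r) I' dr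
  = −∫_{r₀}^∞ (α/(r² β)) (I')² dr − ∫_{r₀}^∞ w' I² dr − (α(r₀)/(r₀³ β(r₀))) I(r₀)²`. -/
theorem stmt6 (r₀ : ℝ) (hr₀ : 0 < r₀) (β ψ α w w' I : ℝ → ℝ)
    (hβc : ContinuousOn β (Set.Ici r₀)) (hβpos : ∀ r ∈ Set.Ici r₀, 0 < β r)
    (hψc : ContinuousOn ψ (Set.Ici r₀)) (hψ0 : ∀ r ∈ Set.Ici r₀, 0 ≤ ψ r)
    (hint : IntegrableOn (fun rt => β rt * ψ rt / rt) (Set.Ioi r₀))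
    (hI : ∀ r, I r = r ^ 2 * ∫ rt in Set.Ioi r, β rt * ψ rt / rt)
    (hα0 : ∀ r ∈ Set.Ici r₀, 0 ≤ α r)
    (hw : ∀ r, w r = α r / (r ^ 3 * β r))
    (hwd : ∀ r ∈ Set.Ici r₀, HasDerivWithinAt w (w' r) (Set.Ici r₀) r)
    (hw'c : ContinuousOn w' (Set.Ici r₀))
    (hlim : Filter.Tendsto (fun r => w r * I r ^ 2) Filter.atTop (nhds 0))
    (hint1 : IntegrableOn (fun r => α r / (r ^ 2 * β r) * (deriv I r) ^ 2) (Set.Ioi r₀))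
    (hint2 : IntegrableOn (fun r => |w' r| * I r ^ 2) (Set.Ioi r₀))
    (hint3 : IntegrableOn (fun r => α r * ψ r / r * |deriv I r|) (Set.Ioi r₀)) :
    ∫ r in Set.Ioi r₀, α r * ψ r / r * deriv I r
      = -(∫ r in Set.Ioi r₀, α r / (r ^ 2 * β r) * (deriv I r) ^ 2)
        - (∫ r in Set.Ioi r₀, w' r * I r ^ 2)
        - α r₀ / (r₀ ^ 3 * β r₀) * I r₀ ^ 2 :=
  stmt6_general r₀ hr₀ β ψ α w w' I hβc hβpos hψc hint hI hw hwd hw'c hlim hint1 hint2 hint3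
end

section
/- Let r₀ > 0, let η : [0,∞) → ℝ be continuously differentiable such that η' has compact support, and let β, ψ : (r₀,∞) → ℝ be Lebesgue measurable and nonnegative with ∫_{r₀}^∞ r̃ β(r̃) ψ(r̃) dr̃ < ∞. Then 2 ∫₀^∞ r η(r) ( ∫_r^∞ κ(r, r̃) β(r̃) ψ(r̃) dr̃ ) dr = ∫_{r₀}^∞ r̃ η(r̃) β(r̃) ψ(r̃) dr̃ − ∫_{r₀}^∞ (1/r̃) ( ∫₀^{r̃} r² η'(r) dr ) β(r̃) ψ(r̃) dr̃, and all three integrals are finite. -/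
open MeasureTheory Set

/-! Fubini on the region `0 < r < r̃`, `r̃ > r₀`, turns the left side into
`∫_{r₀}^∞ (2/r̃) (∫₀^{r̃} r η(r) dr) β ψ dr̃`, and integration by parts
`2 ∫₀^{r̃} r η = r̃² η(r̃) - ∫₀^{r̃} r² η'` gives the right side. All integrability comes from the
first moment of `β ψ`: as `η'` has compact support, `η` and `∫₀^{r̃} r² η'` are bounded on
`[0, ∞)`, so every integrand is `O(r̃ |β ψ (r̃)|)` on `(r₀, ∞)`. -/

section HalfLine

variable {h : ℝ → ℝ}

theorem continuousOn_primitive_Ici (hh : LocallyIntegrableOn h (Ici 0)) :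
    ContinuousOn (fun t => ∫ x in 0..t, h x) (Ici 0) := by
  intro t ht
  have ht1 : (0 : ℝ) ≤ t + 1 := by linarith [mem_Ici.mp ht]
  have hIcc : IntegrableOn h (uIcc 0 (t + 1)) := by
    rw [uIcc_of_le ht1]
    exact hh.integrableOn_compact_subset Icc_subset_Ici_self isCompact_Icc
  have hprim := intervalIntegral.continuousOn_primitive_interval hIcc
  rw [uIcc_of_le ht1] at hprim
  refine (hprim t ⟨ht, by linarith⟩).mono_of_mem_nhdsWithin ?_
  rw [← Ici_inter_Iic]
  exact inter_mem_nhdsWithin _ (Iic_mem_nhds (lt_add_one t))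

theorem integrableOn_Ici_of_hasCompactSupport (hc : ContinuousOn h (Ici 0))
    (hs : HasCompactSupport h) : IntegrableOn h (Ici 0) :=
  ((hc.mono inter_subset_left).integrableOn_compact (hs.isCompact.inter_left isClosed_Ici))
    |>.of_forall_sdiff_eq_zero measurableSet_Ici
      fun _ hx => image_eq_zero_of_notMem_tsupport fun h' => hx.2 ⟨hx.1, h'⟩

theorem exists_abs_integral_le_of_hasCompactSupport (hc : ContinuousOn h (Ici 0))
    (hs : HasCompactSupport h) : ∃ C, ∀ t ∈ Ici (0 : ℝ), |∫ x in 0..t, h x| ≤ C := by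
  refine ⟨∫ x in Ici 0, |h x|, fun t ht => ?_⟩
  calc |∫ x in 0..t, h x| ≤ ∫ x in 0..t, |h x| := intervalIntegral.abs_integral_le_integral_abs ht
    _ = ∫ x in Ioc 0 t, |h x| := intervalIntegral.integral_of_le ht
    _ ≤ ∫ x in Ici 0, |h x| :=
      setIntegral_mono_set (integrableOn_Ici_of_hasCompactSupport hc hs).abs
        (Filter.Eventually.of_forall fun x => abs_nonneg (h x))
        (Filter.Eventually.of_forall fun _ hx => mem_Ici.mpr (le_of_lt hx.1))

end HalfLine

section Derivative

variable {η η' : ℝ → ℝ}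

theorem integral_eq_sub_of_hasDerivWithinAt_Ici
    (hηd : ∀ r ∈ Ici 0, HasDerivWithinAt η (η' r) (Ici 0) r)
    (hη'c : ContinuousOn η' (Ici 0)) {t : ℝ} (ht : 0 ≤ t) :
    ∫ r in 0..t, η' r = η t - η 0 :=
  intervalIntegral.integral_eq_sub_of_hasDeriv_right_of_le ht
    (fun r hr => (hηd r hr.1).continuousWithinAt.mono Icc_subset_Ici_self)
    (fun r hr => (hηd r hr.1.le).mono (Ioi_subset_Ici hr.1.le))
    ((hη'c.mono Icc_subset_Ici_self).intervalIntegrable_of_Icc ht)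

theorem exists_abs_le_of_hasCompactSupport_deriv
    (hηd : ∀ r ∈ Ici 0, HasDerivWithinAt η (η' r) (Ici 0) r)
    (hη'c : ContinuousOn η' (Ici 0)) (hη's : HasCompactSupport η') :
    ∃ C, ∀ t ∈ Ici (0 : ℝ), |η t| ≤ C := by
  obtain ⟨C, hC⟩ := exists_abs_integral_le_of_hasCompactSupport hη'c hη's
  refine ⟨|η 0| + C, fun t ht => ?_⟩
  have hΔ := hC t ht
  rw [integral_eq_sub_of_hasDerivWithinAt_Ici hηd hη'c ht] at hΔ
  calc |η t| = |η 0 + (η t - η 0)| := by ring_nf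
    _ ≤ |η 0| + C := (abs_add_le _ _).trans (by linarith)

theorem two_mul_integral_id_mul_eq (hηd : ∀ r ∈ Ici 0, HasDerivWithinAt η (η' r) (Ici 0) r)
    (hη'c : ContinuousOn η' (Ici 0)) {t : ℝ} (ht : 0 ≤ t) :
    2 * ∫ r in 0..t, r * η r = t ^ 2 * η t - ∫ r in 0..t, r ^ 2 * η' r := by
  have hIcc : uIcc 0 t ⊆ Ici 0 := by rw [uIcc_of_le ht]; exact Icc_subset_Ici_self
  have hIoo : ∀ x ∈ Ioo (min 0 t) (max 0 t), 0 < x := fun x hx => by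
    rw [min_eq_left ht] at hx; exact hx.1
  have hparts := intervalIntegral.integral_mul_deriv_eq_deriv_mul_of_hasDeriv_right
    (u := fun r => r ^ 2) (u' := fun r => 2 * r) (v := η) (v' := η')
    (continuous_pow 2).continuousOn
    (fun r hr => (hηd r (hIcc hr)).continuousWithinAt.mono hIcc)
    (fun x _ => by simpa using (hasDerivAt_pow 2 x).hasDerivWithinAt)
    (fun x hx => (hηd x (hIoo x hx).le).mono (Ioi_subset_Ici (hIoo x hx).le))
    ((continuous_const.mul continuous_id).intervalIntegrable _ _)
    ((hη'c.mono hIcc).intervalIntegrable)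
  simp only [mul_assoc, intervalIntegral.integral_const_mul] at hparts
  linarith

end Derivative

section FirstMoment

variable {r₀ : ℝ} {f : ℝ → ℝ}

theorem aestronglyMeasurable_of_integrableOn_Ioi_mul (hr₀ : 0 ≤ r₀)
    (hf : IntegrableOn (fun x => x * f x) (Ioi r₀)) :
    AEStronglyMeasurable f (volume.restrict (Ioi r₀)) := by
  refine (measurable_inv.aestronglyMeasurable.mul hf.aestronglyMeasurable).congr ?_
  filter_upwards [ae_restrict_mem measurableSet_Ioi] with x hx
  exact inv_mul_cancel_left₀ (hr₀.trans_lt hx).ne' (f x)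

theorem integrableOn_Ioi_mul_of_abs_le_mul (hr₀ : 0 ≤ r₀)
    (hf : IntegrableOn (fun x => x * f x) (Ioi r₀)) {w : ℝ → ℝ} {C : ℝ}
    (hw : AEStronglyMeasurable w (volume.restrict (Ioi r₀)))
    (hwC : ∀ x ∈ Ioi r₀, |w x| ≤ C * x) :
    IntegrableOn (fun x => w x * f x) (Ioi r₀) := by
  have hbdd : IntegrableOn (fun x => w x * x⁻¹ * (x * f x)) (Ioi r₀) := by
    refine hf.bdd_mul (c := C) (hw.mul measurable_inv.aestronglyMeasurable) ?_
    filter_upwards [ae_restrict_mem measurableSet_Ioi] with x hx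
    have hx0 : 0 < x := hr₀.trans_lt hx
    rw [Real.norm_eq_abs, abs_mul, abs_inv, abs_of_pos hx0, ← div_eq_mul_inv, div_le_iff₀ hx0]
    exact hwC x hx
  refine hbdd.congr_fun (fun x hx => ?_) measurableSet_Ioi
  field_simp [(hr₀.trans_lt hx).ne']

end FirstMoment

section Moments

variable {r₀ : ℝ} {η η' f : ℝ → ℝ}

theorem integrableOn_Ioi_self_mul_mul (hr₀ : 0 ≤ r₀)
    (hηd : ∀ r ∈ Ici 0, HasDerivWithinAt η (η' r) (Ici 0) r)
    (hη'c : ContinuousOn η' (Ici 0)) (hη's : HasCompactSupport η')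
    (hf : IntegrableOn (fun x => x * f x) (Ioi r₀)) :
    IntegrableOn (fun x => x * η x * f x) (Ioi r₀) := by
  obtain ⟨C, hC⟩ := exists_abs_le_of_hasCompactSupport_deriv hηd hη'c hη's
  have hηc : ContinuousOn η (Ici 0) := fun r hr => (hηd r hr).continuousWithinAt
  refine integrableOn_Ioi_mul_of_abs_le_mul (C := C) hr₀ hf
    (((continuousOn_id.mul hηc).mono (Ioi_subset_Ici hr₀)).aestronglyMeasurable
      measurableSet_Ioi) fun x hx => ?_
  have hx0 : 0 ≤ x := hr₀.trans hx.le
  rw [abs_mul, abs_of_nonneg hx0, mul_comm C]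
  exact mul_le_mul_of_nonneg_left (hC x hx0) hx0

theorem integrableOn_Ioi_integral_abs_div_mul (hr₀ : 0 ≤ r₀)
    (hηd : ∀ r ∈ Ici 0, HasDerivWithinAt η (η' r) (Ici 0) r)
    (hη'c : ContinuousOn η' (Ici 0)) (hη's : HasCompactSupport η')
    (hf : IntegrableOn (fun x => x * f x) (Ioi r₀)) :
    IntegrableOn (fun x => (∫ r in 0..x, |r * η r|) / x * f x) (Ioi r₀) := by
  obtain ⟨C, hC⟩ := exists_abs_le_of_hasCompactSupport_deriv hηd hη'c hη's
  have hηc : ContinuousOn η (Ici 0) := fun r hr => (hηd r hr).continuousWithinAt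
  have hprim := continuousOn_primitive_Ici
    ((continuousOn_id.mul hηc).abs.locallyIntegrableOn measurableSet_Ici :
      LocallyIntegrableOn (fun r => |r * η r|) (Ici 0))
  refine integrableOn_Ioi_mul_of_abs_le_mul (C := C) hr₀ hf
    (((hprim.mono (Ioi_subset_Ici hr₀)).div continuousOn_id
      fun x hx => (hr₀.trans_lt hx).ne').aestronglyMeasurable measurableSet_Ioi) fun x hx => ?_
  have hx0 : 0 < x := hr₀.trans_lt hx
  have hbound : ∀ r ∈ uIoc 0 x, ‖|r * η r|‖ ≤ x * C := fun r hr => by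
    rw [uIoc_of_le hx0.le] at hr
    rw [norm_abs_eq_norm, Real.norm_eq_abs, abs_mul, abs_of_pos hr.1]
    exact mul_le_mul hr.2 (hC r hr.1.le) (abs_nonneg _) hx0.le
  have hint := intervalIntegral.norm_integral_le_of_norm_le_const hbound
  rw [Real.norm_eq_abs, sub_zero, abs_of_pos hx0] at hint
  rw [abs_div, abs_of_pos hx0, div_le_iff₀ hx0]
  linarith

theorem integrableOn_Ioi_one_div_mul_integral_mul (hr₀ : 0 < r₀)
    (hη'c : ContinuousOn η' (Ici 0)) (hη's : HasCompactSupport η')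
    (hf : IntegrableOn (fun x => x * f x) (Ioi r₀)) :
    IntegrableOn (fun x => 1 / x * (∫ r in 0..x, r ^ 2 * η' r) * f x) (Ioi r₀) := by
  have hc : ContinuousOn (fun r => r ^ 2 * η' r) (Ici 0) := (continuousOn_pow 2).mul hη'c
  obtain ⟨K, hK⟩ := exists_abs_integral_le_of_hasCompactSupport hc (hη's.mul_left)
  have hK0 : 0 ≤ K := (abs_nonneg _).trans (hK 0 (mem_Ici.mpr le_rfl))
  have hprim := continuousOn_primitive_Ici (hc.locallyIntegrableOn measurableSet_Ici)
  refine integrableOn_Ioi_mul_of_abs_le_mul (C := K / r₀ ^ 2) hr₀.le hf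
    (((continuousOn_const.div continuousOn_id fun x hx => (hr₀.trans hx).ne').mul
      (hprim.mono (Ioi_subset_Ici hr₀.le))).aestronglyMeasurable measurableSet_Ioi)
    fun x hx => ?_
  have hx0 : 0 < x := hr₀.trans hx
  have hsq : r₀ ^ 2 ≤ x ^ 2 := pow_le_pow_left₀ hr₀.le (le_of_lt hx) 2
  calc |1 / x * ∫ r in 0..x, r ^ 2 * η' r| ≤ K / x := by
        rw [abs_mul, abs_of_pos (one_div_pos.mpr hx0), one_div_mul_eq_div]
        exact div_le_div_of_nonneg_right (hK x hx0.le) hx0.le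
    _ ≤ K / r₀ ^ 2 * x := by
        rw [div_mul_eq_mul_div, div_le_div_iff₀ hx0 (by positivity)]
        nlinarith

end Moments

section Kappa

variable {r₀ r rt : ℝ}

theorem kappa_eq_zero_of_le_left (h : rt ≤ r) : kappa r₀ r rt = 0 :=
  if_neg fun hc => (hc.2.2.trans_le h).false

theorem kappa_eq_zero_of_le (h : rt ≤ r₀) : kappa r₀ r rt = 0 :=
  if_neg fun hc => (hc.1.trans_le h).false

theorem kappa_nonneg : 0 ≤ kappa r₀ r rt := by
  unfold kappa
  split_ifs with h
  · exact one_div_nonneg.mpr (h.2.1.trans h.2.2).le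
  · exact le_rfl

theorem setIntegral_Ioi_kappa_mul (f : ℝ → ℝ) :
    ∫ rt in Ioi r, kappa r₀ r rt * f rt = ∫ rt in Ioi r₀, kappa r₀ r rt * f rt := by
  rw [setIntegral_eq_integral_of_forall_compl_eq_zero,
    setIntegral_eq_integral_of_forall_compl_eq_zero]
  · exact fun rt h => by rw [kappa_eq_zero_of_le (not_lt.mp h), zero_mul]
  · exact fun rt h => by rw [kappa_eq_zero_of_le_left (not_lt.mp h), zero_mul]

theorem measurable_kappa (r₀ : ℝ) : Measurable fun p : ℝ × ℝ => kappa r₀ p.1 p.2 := by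
  refine Measurable.ite ?_ (measurable_const.div measurable_snd) measurable_const
  exact (measurableSet_lt measurable_const measurable_snd).inter
    ((measurableSet_lt measurable_const measurable_fst).inter
      (measurableSet_lt measurable_fst measurable_snd))

theorem mul_kappa_eq_indicator (h : r₀ < rt) (G : ℝ → ℝ) :
    (fun r => G r * kappa r₀ r rt) = (Ioo 0 rt).indicator fun r => G r / rt := by
  ext r
  by_cases hr : r ∈ Ioo 0 rt
  · rw [indicator_of_mem hr, kappa, if_pos ⟨h, hr⟩, mul_one_div]
  · rw [indicator_of_notMem hr, kappa, if_neg fun hc => hr ⟨hc.2.1, hc.2.2⟩, mul_zero]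

theorem setIntegral_mul_kappa (hr₀ : 0 ≤ r₀) (h : r₀ < rt) (G : ℝ → ℝ) :
    ∫ r in Ioi 0, G r * kappa r₀ r rt = (∫ r in 0..rt, G r) / rt := by
  rw [mul_kappa_eq_indicator h, setIntegral_indicator measurableSet_Ioo,
    inter_eq_right.mpr Ioo_subset_Ioi_self, ← integral_Ioc_eq_integral_Ioo,
    ← intervalIntegral.integral_of_le (hr₀.trans h.le), intervalIntegral.integral_div]

section Fubini

variable {g f : ℝ → ℝ}

theorem integrable_prod_mul_kappa (hr₀ : 0 ≤ r₀) (hg : LocallyIntegrableOn g (Ici 0))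
    (hf : AEStronglyMeasurable f (volume.restrict (Ioi r₀)))
    (hgf : IntegrableOn (fun rt => (∫ r in 0..rt, |g r|) / rt * f rt) (Ioi r₀)) :
    Integrable (fun p : ℝ × ℝ => g p.1 * kappa r₀ p.1 p.2 * f p.2)
      ((volume.restrict (Ioi 0)).prod (volume.restrict (Ioi r₀))) := by
  have hgm : AEStronglyMeasurable g (volume.restrict (Ioi 0)) :=
    hg.aestronglyMeasurable.mono_set Ioi_subset_Ici_self
  refine (integrable_prod_iff' ((hgm.comp_fst.mul
    (measurable_kappa r₀).aestronglyMeasurable).mul hf.comp_snd)).2 ⟨?_, ?_⟩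
  · filter_upwards [ae_restrict_mem measurableSet_Ioi] with rt hrt
    refine Integrable.mul_const (f := fun r => g r * kappa r₀ r rt) ?_ (f rt)
    rw [mul_kappa_eq_indicator hrt]
    have hgi : IntegrableOn g (Ioo 0 rt) :=
      (hg.integrableOn_compact_subset Icc_subset_Ici_self isCompact_Icc).mono_set
        Ioo_subset_Icc_self
    exact (IntegrableOn.integrable_indicator (hgi.div_const rt) measurableSet_Ioo).integrableOn
  · refine hgf.norm.congr ?_
    filter_upwards [ae_restrict_mem measurableSet_Ioi] with rt hrt
    have hrt0 : 0 < rt := hr₀.trans_lt hrt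
    have hnorm : ∀ r, ‖g r * kappa r₀ r rt * f rt‖ = |g r| * kappa r₀ r rt * |f rt| := fun r => by
      rw [Real.norm_eq_abs, abs_mul, abs_mul, abs_of_nonneg kappa_nonneg]
    have hprim : 0 ≤ ∫ r in 0..rt, |g r| :=
      intervalIntegral.integral_nonneg hrt0.le fun r _ => abs_nonneg (g r)
    simp_rw [Pi.mul_apply, hnorm, integral_mul_const, setIntegral_mul_kappa hr₀ hrt,
      Real.norm_eq_abs, abs_mul, abs_div, abs_of_nonneg hprim, abs_of_pos hrt0]

theorem integrableOn_mul_integral_kappa (hr₀ : 0 ≤ r₀) (hg : LocallyIntegrableOn g (Ici 0))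
    (hf : AEStronglyMeasurable f (volume.restrict (Ioi r₀)))
    (hgf : IntegrableOn (fun rt => (∫ r in 0..rt, |g r|) / rt * f rt) (Ioi r₀)) :
    IntegrableOn (fun r => g r * ∫ rt in Ioi r, kappa r₀ r rt * f rt) (Ioi 0) := by
  refine (integrable_prod_mul_kappa hr₀ hg hf hgf).integral_prod_left.congr
    (Filter.Eventually.of_forall fun r => ?_)
  simp only [mul_assoc, integral_const_mul, setIntegral_Ioi_kappa_mul]

theorem integral_mul_integral_kappa (hr₀ : 0 ≤ r₀) (hg : LocallyIntegrableOn g (Ici 0))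
    (hf : AEStronglyMeasurable f (volume.restrict (Ioi r₀)))
    (hgf : IntegrableOn (fun rt => (∫ r in 0..rt, |g r|) / rt * f rt) (Ioi r₀)) :
    ∫ r in Ioi 0, g r * ∫ rt in Ioi r, kappa r₀ r rt * f rt
      = ∫ rt in Ioi r₀, (∫ r in 0..rt, g r) / rt * f rt := calc
  _ = ∫ r in Ioi 0, ∫ rt in Ioi r₀, g r * kappa r₀ r rt * f rt := by
    simp only [mul_assoc, integral_const_mul, setIntegral_Ioi_kappa_mul]
  _ = ∫ rt in Ioi r₀, ∫ r in Ioi 0, g r * kappa r₀ r rt * f rt :=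
    integral_integral_swap (integrable_prod_mul_kappa hr₀ hg hf hgf)
  _ = ∫ rt in Ioi r₀, (∫ r in 0..rt, g r) / rt * f rt :=
    setIntegral_congr_fun measurableSet_Ioi fun rt hrt => by
      rw [integral_mul_const, setIntegral_mul_kappa hr₀ hrt]

end Fubini

end Kappa

theorem stmt12_general (r₀ : ℝ) (hr₀ : 0 < r₀) (η η' β ψ : ℝ → ℝ)
    (hηd : ∀ r ∈ Set.Ici (0 : ℝ), HasDerivWithinAt η (η' r) (Set.Ici 0) r)
    (hη'c : ContinuousOn η' (Set.Ici 0))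
    (hη's : HasCompactSupport η')
    (hint : IntegrableOn (fun rt => rt * (β rt * ψ rt)) (Set.Ioi r₀)) :
    IntegrableOn
        (fun r => r * η r * ∫ rt in Set.Ioi r, kappa r₀ r rt * (β rt * ψ rt))
        (Set.Ioi (0 : ℝ)) ∧
    IntegrableOn (fun rt => rt * η rt * (β rt * ψ rt)) (Set.Ioi r₀) ∧
    IntegrableOn
        (fun rt => (1 / rt) * (∫ r in (0 : ℝ)..rt, r ^ 2 * η' r) * (β rt * ψ rt))
        (Set.Ioi r₀) ∧
    2 * ∫ r in Set.Ioi (0 : ℝ), r * η r * ∫ rt in Set.Ioi r, kappa r₀ r rt * (β rt * ψ rt)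
      = (∫ rt in Set.Ioi r₀, rt * η rt * (β rt * ψ rt))
        - ∫ rt in Set.Ioi r₀, (1 / rt) * (∫ r in (0 : ℝ)..rt, r ^ 2 * η' r) * (β rt * ψ rt) := by
  have hf := aestronglyMeasurable_of_integrableOn_Ioi_mul hr₀.le hint
  have hg : LocallyIntegrableOn (fun r => r * η r) (Ici 0) :=
    (continuousOn_id.mul fun r hr => (hηd r hr).continuousWithinAt).locallyIntegrableOn
      measurableSet_Ici
  have hgf := integrableOn_Ioi_integral_abs_div_mul hr₀.le hηd hη'c hη's hint
  have hmass := integrableOn_Ioi_self_mul_mul hr₀.le hηd hη'c hη's hint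
  have hflux := integrableOn_Ioi_one_div_mul_integral_mul hr₀ hη'c hη's hint
  refine ⟨integrableOn_mul_integral_kappa hr₀.le hg hf hgf, hmass, hflux, ?_⟩
  rw [integral_mul_integral_kappa hr₀.le hg hf hgf, ← integral_sub hmass hflux,
    ← integral_const_mul]
  refine setIntegral_congr_fun measurableSet_Ioi fun rt hrt => ?_
  have hrt0 : 0 < rt := hr₀.trans hrt
  have hparts := two_mul_integral_id_mul_eq hηd hη'c hrt0.le
  field_simp
  linear_combination (β rt * ψ rt) * hparts

/-- The key computation (psi-cal3_ff) in the proof of the conservation-of-mass identity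
for the limiting weak solution: for `η` continuously differentiable on `[0,∞)` with `η'`
of compact support, and `β, ψ ≥ 0` with finite first moment of `β ψ`,
`2 ∫₀^∞ r η(r) (∫_r^∞ κ(r,r̃) β ψ dr̃) dr
  = ∫_{r₀}^∞ r̃ η(r̃) β ψ dr̃ − ∫_{r₀}^∞ (1/r̃)(∫₀^{r̃} r² η'(r) dr) β ψ dr̃`,
and all three integrals are finite. -/
theorem stmt12 (r₀ : ℝ) (hr₀ : 0 < r₀) (η η' β ψ : ℝ → ℝ)
    (hηd : ∀ r ∈ Set.Ici (0 : ℝ), HasDerivWithinAt η (η' r) (Set.Ici 0) r)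
    (hη'c : ContinuousOn η' (Set.Ici 0))
    (hη's : HasCompactSupport η')
    (hβm : AEMeasurable β (volume.restrict (Set.Ioi r₀)))
    (hψm : AEMeasurable ψ (volume.restrict (Set.Ioi r₀)))
    (hβ0 : ∀ r ∈ Set.Ioi r₀, 0 ≤ β r) (hψ0 : ∀ r ∈ Set.Ioi r₀, 0 ≤ ψ r)
    (hint : IntegrableOn (fun rt => rt * (β rt * ψ rt)) (Set.Ioi r₀)) :
    IntegrableOn
        (fun r => r * η r * ∫ rt in Set.Ioi r, kappa r₀ r rt * (β rt * ψ rt))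
        (Set.Ioi (0 : ℝ)) ∧
    IntegrableOn (fun rt => rt * η rt * (β rt * ψ rt)) (Set.Ioi r₀) ∧
    IntegrableOn
        (fun rt => (1 / rt) * (∫ r in (0 : ℝ)..rt, r ^ 2 * η' r) * (β rt * ψ rt))
        (Set.Ioi r₀) ∧
    2 * ∫ r in Set.Ioi (0 : ℝ), r * η r * ∫ rt in Set.Ioi r, kappa r₀ r rt * (β rt * ψ rt)
      = (∫ rt in Set.Ioi r₀, rt * η rt * (β rt * ψ rt))
        - ∫ rt in Set.Ioi r₀, (1 / rt) * (∫ r in (0 : ℝ)..rt, r ^ 2 * η' r) * (β rt * ψ rt) :=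
  stmt12_general r₀ hr₀ η η' β ψ hηd hη'c hη's hint
end
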